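/- Consider k parallel coupled chains X_t^{(j)} = ψ_t(X_{t−1}^{(j)}, U_t^{(j)}) for j = 1, …, k and t = 1, …, T, where each ψ_t : ℝ^p × ℝ^d → ℝ^p is measurable and nondecreasing in both arguments (with respect to the coordinatewise partial orders), the k-tuples 𝒰_t = {U_t^{(1)}, …, U_t^{(k)}} (t = 1, …, T) are T mutually independent sets of negatively associated ℝ^d-valued random vectors, and these are also independent of the initial tuple {X_0^{(1)}, …, X_0^{(k)}}. Then the k-tuple {X_{t_1}^{(1)}, …, X_{t_k}^{(k)}} is a collection of k negatively associated random vectors for every choice of times (t_1, …, t_k) ∈ {0, 1, …, T}^k if and only if this holds for t_1 = ⋯ = t_k = 0 (i.e., the initial tuple {X_0^{(1)}, …, X_0^{(k)}} is negatively associated). -/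

import Mathlib

/-!
Independent negatively associated families can be merged: if `X` and `Y` are independent
and each negatively associated, so is `(g j (X j, Y j))_j` for monotone `g j`. Conditioning on
`X`, the covariance of two monotone statistics is the average of the conditional covariances,
which are nonpositive by negative association of `Y`, plus the covariance of the conditional
means, which are monotone functions of `X`. Truncation reduces everything to bounded statistics,
for which Fubini applies.

The chains up to time `n` are functions of `X_0, U_1, …, U_n`, which are jointly independent of
`U_{n+1}`; merging them with `U_{n+1}` through the update maps (or through the projection, for
chains that have already stopped) gives the claim by induction on the largest time. The converse
is the case where all times are `0`.
-/

open MeasureTheory ProbabilityTheory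

/-- Covariance of two real-valued functions with respect to a measure. -/
noncomputable def covar {Ω : Type*} [MeasurableSpace Ω] (μ : Measure Ω) (f g : Ω → ℝ) : ℝ :=
  (∫ ω, f ω * g ω ∂μ) - (∫ ω, f ω ∂μ) * ∫ ω, g ω ∂μ

/-- Negative association of a finite family of `ℝᵐ`-valued random vectors:
for every pair of disjoint index sets and every pair of real-valued functions,
each nondecreasing in every real coordinate of its arguments (and measurable),
for which the covariance is well defined, the covariance is nonpositive. -/
def NegAssocVec {Ω : Type*} [MeasurableSpace Ω] (μ : Measure Ω) {n m : ℕ}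
    (X : Fin n → Ω → (Fin m → ℝ)) : Prop :=
  ∀ A₁ A₂ : Finset (Fin n), Disjoint A₁ A₂ →
    ∀ f₁ : ({ i // i ∈ A₁ } → Fin m → ℝ) → ℝ, ∀ f₂ : ({ i // i ∈ A₂ } → Fin m → ℝ) → ℝ,
      Monotone f₁ → Monotone f₂ → Measurable f₁ → Measurable f₂ →
      Integrable (fun ω => f₁ (fun i => X i.1 ω)) μ →
      Integrable (fun ω => f₂ (fun i => X i.1 ω)) μ →
      Integrable (fun ω => f₁ (fun i => X i.1 ω) * f₂ (fun i => X i.1 ω)) μ →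
      covar μ (fun ω => f₁ (fun i => X i.1 ω)) (fun ω => f₂ (fun i => X i.1 ω)) ≤ 0

/-- The `k` parallel coupled chains `X_t⁽ʲ⁾ = ψ_t (X_{t-1}⁽ʲ⁾, U_t⁽ʲ⁾)`. -/
def chain {Ω : Type*} {p d k : ℕ} (ψ : ℕ → (Fin p → ℝ) → (Fin d → ℝ) → Fin p → ℝ)
    (X0 : Fin k → Ω → Fin p → ℝ) (U : ℕ → Fin k → Ω → Fin d → ℝ) :
    ℕ → Fin k → Ω → Fin p → ℝ
  | 0 => X0
  | t + 1 => fun j ω => ψ (t + 1) (chain ψ X0 U t j ω) (U (t + 1) j ω)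

open Filter Topology

section Truncation

def clip (M x : ℝ) : ℝ := max (-M) (min M x)

lemma monotone_clip (M : ℝ) : Monotone (clip M) :=
  fun _ _ h => max_le_max le_rfl (min_le_min le_rfl h)

lemma continuous_clip (M : ℝ) : Continuous (clip M) := by
  unfold clip; fun_prop

lemma abs_clip_le {M : ℝ} (hM : 0 ≤ M) (x : ℝ) : |clip M x| ≤ M := by
  unfold clip; rw [abs_le]; constructor <;> simp [hM]

lemma abs_clip_le_abs {M : ℝ} (hM : 0 ≤ M) (x : ℝ) : |clip M x| ≤ |x| := by
  unfold clip; rw [abs_le]; constructor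
  · grind [abs_nonneg, neg_abs_le]
  · grind [abs_nonneg, le_abs_self]

lemma tendsto_clip (x : ℝ) : Tendsto (fun M : ℕ => clip M x) atTop (𝓝 x) := by
  refine tendsto_const_nhds.congr' ?_
  filter_upwards [tendsto_natCast_atTop_atTop.eventually_ge_atTop |x|] with M hM
  rw [abs_le] at hM
  simp [clip, hM.1, hM.2]

end Truncation

section Covariance

variable {Ω : Type*} [MeasurableSpace Ω] {μ : Measure Ω}

lemma tendsto_covar_clip {g₁ g₂ : Ω → ℝ} (hg₁ : Integrable g₁ μ) (hg₂ : Integrable g₂ μ)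
    (hg₁₂ : Integrable (fun ω => g₁ ω * g₂ ω) μ) :
    Tendsto (fun M : ℕ => covar μ (fun ω => clip M (g₁ ω)) (fun ω => clip M (g₂ ω))) atTop
      (𝓝 (covar μ g₁ g₂)) := by
  have hclip : ∀ (g : Ω → ℝ), Integrable g μ →
      Tendsto (fun M : ℕ => ∫ ω, clip M (g ω) ∂μ) atTop (𝓝 (∫ ω, g ω ∂μ)) := fun g hg =>
    tendsto_integral_of_dominated_convergence (fun ω => |g ω|)
      (fun M => (continuous_clip M).comp_aestronglyMeasurable hg.aestronglyMeasurable) hg.abs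
      (fun M => ae_of_all _ fun ω => abs_clip_le_abs M.cast_nonneg _)
      (ae_of_all _ fun ω => tendsto_clip _)
  have hprod : Tendsto (fun M : ℕ => ∫ ω, clip M (g₁ ω) * clip M (g₂ ω) ∂μ) atTop
      (𝓝 (∫ ω, g₁ ω * g₂ ω ∂μ)) :=
    tendsto_integral_of_dominated_convergence (fun ω => |g₁ ω * g₂ ω|)
      (fun M => ((continuous_clip M).comp_aestronglyMeasurable hg₁.aestronglyMeasurable).mul
        ((continuous_clip M).comp_aestronglyMeasurable hg₂.aestronglyMeasurable)) hg₁₂.abs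
      (fun M => ae_of_all _ fun ω => by
        rw [Real.norm_eq_abs, abs_mul, abs_mul]
        exact mul_le_mul (abs_clip_le_abs M.cast_nonneg _) (abs_clip_le_abs M.cast_nonneg _)
          (abs_nonneg _) (abs_nonneg _))
      (ae_of_all _ fun ω => (tendsto_clip _).mul (tendsto_clip _))
  exact hprod.sub ((hclip g₁ hg₁).mul (hclip g₂ hg₂))

lemma covar_map {α : Type*} [MeasurableSpace α] {Y : Ω → α} (hY : Measurable Y) {f g : α → ℝ}
    (hf : Measurable f) (hg : Measurable g) :
    covar (μ.map Y) f g = covar μ (fun ω => f (Y ω)) (fun ω => g (Y ω)) := by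
  simp only [covar]
  rw [integral_map (f := fun a => f a * g a) hY.aemeasurable (hf.mul hg).aestronglyMeasurable,
    integral_map hY.aemeasurable hf.aestronglyMeasurable,
    integral_map hY.aemeasurable hg.aestronglyMeasurable]

lemma covar_prod_nonpos {α β : Type*} [MeasurableSpace α] [MeasurableSpace β] {ν : Measure α}
    {ρ : Measure β} [IsFiniteMeasure ν] [IsFiniteMeasure ρ] {h₁ h₂ : α × β → ℝ}
    (hm₁ : Measurable h₁) (hm₂ : Measurable h₂) {C₁ C₂ : ℝ}
    (hb₁ : ∀ q, ‖h₁ q‖ ≤ C₁) (hb₂ : ∀ q, ‖h₂ q‖ ≤ C₂)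
    (hsection : ∀ v, covar ρ (fun w => h₁ (v, w)) (fun w => h₂ (v, w)) ≤ 0)
    (haverage : covar ν (fun v => ∫ w, h₁ (v, w) ∂ρ) (fun v => ∫ w, h₂ (v, w) ∂ρ) ≤ 0) :
    covar (ν.prod ρ) h₁ h₂ ≤ 0 := by
  have hi₁ : Integrable h₁ (ν.prod ρ) := .of_bound hm₁.aestronglyMeasurable C₁ (ae_of_all _ hb₁)
  have hi₂ : Integrable h₂ (ν.prod ρ) := .of_bound hm₂.aestronglyMeasurable C₂ (ae_of_all _ hb₂)
  have hi₁₂ : Integrable (fun q => h₁ q * h₂ q) (ν.prod ρ) :=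
    hi₂.bdd_mul hm₁.aestronglyMeasurable (ae_of_all _ hb₁)
  have hF₂ : ∀ v, ‖∫ w, h₂ (v, w) ∂ρ‖ ≤ C₂ * ρ.real Set.univ := fun v =>
    norm_integral_le_of_norm_le_const (ae_of_all _ fun w => hb₂ (v, w))
  have hinner : ∫ v, ∫ w, h₁ (v, w) * h₂ (v, w) ∂ρ ∂ν ≤
      ∫ v, (∫ w, h₁ (v, w) ∂ρ) * ∫ w, h₂ (v, w) ∂ρ ∂ν :=
    integral_mono hi₁₂.integral_prod_left
      (hi₁.integral_prod_left.mul_bdd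
        hm₂.stronglyMeasurable.integral_prod_right'.aestronglyMeasurable (ae_of_all _ hF₂))
      fun v => sub_nonpos.mp (hsection v)
  unfold covar at haverage ⊢
  rw [integral_prod _ hi₁₂, integral_prod _ hi₁, integral_prod _ hi₂]
  linarith

lemma monotone_integral {α β : Type*} [Preorder α] [MeasurableSpace β] {ρ : Measure β}
    [IsFiniteMeasure ρ] {F : α → β → ℝ} {C : ℝ} (hF : ∀ w, Monotone fun v => F v w)
    (hFm : ∀ v, Measurable (F v)) (hb : ∀ v w, ‖F v w‖ ≤ C) :
    Monotone fun v => ∫ w, F v w ∂ρ := fun v v' hv =>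
  integral_mono (.of_bound (hFm v).aestronglyMeasurable C (ae_of_all _ (hb v)))
    (.of_bound (hFm v').aestronglyMeasurable C (ae_of_all _ (hb v'))) fun w => hF w hv

end Covariance

namespace NegAssocVec

variable {Ω : Type*} [MeasurableSpace Ω] {μ : Measure Ω} {n m : ℕ}

lemma of_bounded {X : Fin n → Ω → Fin m → ℝ}
    (h : ∀ A₁ A₂ : Finset (Fin n), Disjoint A₁ A₂ →
      ∀ f₁ : ({ i // i ∈ A₁ } → Fin m → ℝ) → ℝ, ∀ f₂ : ({ i // i ∈ A₂ } → Fin m → ℝ) → ℝ,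
        Monotone f₁ → Monotone f₂ → Measurable f₁ → Measurable f₂ →
        (∃ C, ∀ x, ‖f₁ x‖ ≤ C) → (∃ C, ∀ x, ‖f₂ x‖ ≤ C) →
        covar μ (fun ω => f₁ (fun i => X i.1 ω)) (fun ω => f₂ (fun i => X i.1 ω)) ≤ 0) :
    NegAssocVec μ X := by
  intro A₁ A₂ hA f₁ f₂ hf₁ hf₂ hf₁m hf₂m hi₁ hi₂ hi₁₂
  refine le_of_tendsto (tendsto_covar_clip hi₁ hi₂ hi₁₂) (Eventually.of_forall fun M => ?_)
  have hclip : ∀ x, ‖clip M x‖ ≤ M := abs_clip_le M.cast_nonneg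
  exact h A₁ A₂ hA _ _ ((monotone_clip M).comp hf₁) ((monotone_clip M).comp hf₂)
    ((continuous_clip M).measurable.comp hf₁m) ((continuous_clip M).measurable.comp hf₂m)
    ⟨M, fun _ => hclip _⟩ ⟨M, fun _ => hclip _⟩

lemma covar_nonpos_of_bounded [IsFiniteMeasure μ] {X : Fin n → Ω → Fin m → ℝ}
    (hX : NegAssocVec μ X) (hXm : ∀ i, Measurable (X i)) {A₁ A₂ : Finset (Fin n)}
    (hA : Disjoint A₁ A₂) {f₁ : ({ i // i ∈ A₁ } → Fin m → ℝ) → ℝ}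
    {f₂ : ({ i // i ∈ A₂ } → Fin m → ℝ) → ℝ} (hf₁ : Monotone f₁) (hf₂ : Monotone f₂)
    (hf₁m : Measurable f₁) (hf₂m : Measurable f₂) {C₁ C₂ : ℝ}
    (hb₁ : ∀ x, ‖f₁ x‖ ≤ C₁) (hb₂ : ∀ x, ‖f₂ x‖ ≤ C₂) :
    covar μ (fun ω => f₁ (fun i => X i.1 ω)) (fun ω => f₂ (fun i => X i.1 ω)) ≤ 0 := by
  have hg₁ : Measurable fun ω => f₁ (fun i => X i.1 ω) := by fun_prop
  have hg₂ : Measurable fun ω => f₂ (fun i => X i.1 ω) := by fun_prop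
  exact hX A₁ A₂ hA f₁ f₂ hf₁ hf₂ hf₁m hf₂m
    (.of_bound hg₁.aestronglyMeasurable C₁ (ae_of_all _ fun _ => hb₁ _))
    (.of_bound hg₂.aestronglyMeasurable C₂ (ae_of_all _ fun _ => hb₂ _))
    ((Integrable.of_bound hg₂.aestronglyMeasurable C₂ (ae_of_all _ fun _ => hb₂ _)).bdd_mul
      hg₁.aestronglyMeasurable (ae_of_all _ fun _ => hb₁ _))

lemma map₂_of_indepFun [IsFiniteMeasure μ] {k p d : ℕ}
    {X : Fin k → Ω → Fin p → ℝ} {Y : Fin k → Ω → Fin d → ℝ}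
    (hXm : ∀ j, Measurable (X j)) (hYm : ∀ j, Measurable (Y j))
    (hX : NegAssocVec μ X) (hY : NegAssocVec μ Y)
    (hXY : IndepFun (fun ω j => X j ω) (fun ω j => Y j ω) μ)
    {g : Fin k → (Fin p → ℝ) × (Fin d → ℝ) → Fin m → ℝ} (hg : ∀ j, Monotone (g j))
    (hgm : ∀ j, Measurable (g j)) :
    NegAssocVec μ (fun j ω => g j (X j ω, Y j ω)) := by
  refine of_bounded fun A₁ A₂ hA f₁ f₂ hf₁ hf₂ hf₁m hf₂m ⟨C₁, hb₁⟩ ⟨C₂, hb₂⟩ => ?_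
  have hX' : Measurable fun ω j => X j ω := by fun_prop
  have hY' : Measurable fun ω j => Y j ω := by fun_prop
  set ρ := μ.map fun ω j => Y j ω
  let h₁ : (Fin k → Fin p → ℝ) × (Fin k → Fin d → ℝ) → ℝ := fun q => f₁ fun i => g i (q.1 i, q.2 i)
  let h₂ : (Fin k → Fin p → ℝ) × (Fin k → Fin d → ℝ) → ℝ := fun q => f₂ fun i => g i (q.1 i, q.2 i)
  have hh₁ : Measurable h₁ := by fun_prop
  have hh₂ : Measurable h₂ := by fun_prop
  have hlaw := (indepFun_iff_map_prod_eq_prod_map_map hX'.aemeasurable hY'.aemeasurable).mp hXY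
  change covar μ (fun ω => h₁ (fun j => X j ω, fun j => Y j ω))
    (fun ω => h₂ (fun j => X j ω, fun j => Y j ω)) ≤ 0
  rw [← covar_map (hX'.prodMk hY') hh₁ hh₂, hlaw]
  refine covar_prod_nonpos hh₁ hh₂ (fun _ => hb₁ _) (fun _ => hb₂ _) (fun v => ?_) ?_
  · rw [covar_map hY' (by fun_prop) (by fun_prop)]
    exact hY.covar_nonpos_of_bounded hYm hA
      (f₁ := fun w => f₁ fun i => g i (v i, w i)) (f₂ := fun w => f₂ fun i => g i (v i, w i))
      (fun w w' hw => hf₁ fun i => hg i ⟨le_rfl, hw i⟩)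
      (fun w w' hw => hf₂ fun i => hg i ⟨le_rfl, hw i⟩) (by fun_prop) (by fun_prop)
      (fun _ => hb₁ _) (fun _ => hb₂ _)
  · have hjoint₁ : Measurable fun q : ({ i // i ∈ A₁ } → Fin p → ℝ) × (Fin k → Fin d → ℝ) =>
        f₁ fun i => g i (q.1 i, q.2 i) := by fun_prop
    have hjoint₂ : Measurable fun q : ({ i // i ∈ A₂ } → Fin p → ℝ) × (Fin k → Fin d → ℝ) =>
        f₂ fun i => g i (q.1 i, q.2 i) := by fun_prop
    rw [covar_map hX' hh₁.stronglyMeasurable.integral_prod_right'.measurable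
      hh₂.stronglyMeasurable.integral_prod_right'.measurable]
    exact hX.covar_nonpos_of_bounded hXm hA
      (f₁ := fun v => ∫ w, f₁ (fun i => g i (v i, w i)) ∂ρ)
      (f₂ := fun v => ∫ w, f₂ (fun i => g i (v i, w i)) ∂ρ)
      (monotone_integral (fun _ _ _ hv => hf₁ fun i => hg i ⟨hv i, le_rfl⟩)
        (fun v => hjoint₁.comp measurable_prodMk_left) fun _ _ => hb₁ _)
      (monotone_integral (fun _ _ _ hv => hf₂ fun i => hg i ⟨hv i, le_rfl⟩)
        (fun v => hjoint₂.comp measurable_prodMk_left) fun _ _ => hb₂ _)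
      hjoint₁.stronglyMeasurable.integral_prod_right'.measurable
      hjoint₂.stronglyMeasurable.integral_prod_right'.measurable
      (fun _ => norm_integral_le_of_norm_le_const (ae_of_all _ fun _ => hb₁ _))
      (fun _ => norm_integral_le_of_norm_le_const (ae_of_all _ fun _ => hb₂ _))

end NegAssocVec

lemma IndepFun.prodMk_of_indepFun_prodMk {Ω α β γ : Type*} [MeasurableSpace Ω] {μ : Measure Ω}
    [IsFiniteMeasure μ] [MeasurableSpace α] [MeasurableSpace β] [MeasurableSpace γ]
    {P : Ω → α} {R₁ : Ω → β} {R₂ : Ω → γ} (hP : Measurable P) (hR₁ : Measurable R₁)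
    (hR₂ : Measurable R₂) (h : IndepFun P (fun ω => (R₁ ω, R₂ ω)) μ) (h' : IndepFun R₁ R₂ μ) :
    IndepFun (fun ω => (P ω, R₁ ω)) R₂ μ := by
  rw [indepFun_iff_map_prod_eq_prod_map_map (hP.prodMk hR₁).aemeasurable hR₂.aemeasurable,
    (indepFun_iff_map_prod_eq_prod_map_map hP.aemeasurable hR₁.aemeasurable).mp
      (h.comp measurable_id measurable_fst),
    ← MeasurableEquiv.prodAssoc.map_measurableEquiv_injective.eq_iff, Measure.prodAssoc_prod,
    ← (indepFun_iff_map_prod_eq_prod_map_map hR₁.aemeasurable hR₂.aemeasurable).mp h',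
    ← (indepFun_iff_map_prod_eq_prod_map_map hP.aemeasurable (hR₁.prodMk hR₂).aemeasurable).mp h,
    Measure.map_map MeasurableEquiv.prodAssoc.measurable (by fun_prop)]
  rfl

section Chain

variable {Ω : Type*} {p d k : ℕ} {ψ : ℕ → (Fin p → ℝ) → (Fin d → ℝ) → Fin p → ℝ}
  {X0 : Fin k → Ω → Fin p → ℝ} {U : ℕ → Fin k → Ω → Fin d → ℝ}

lemma measurable_chain {m : MeasurableSpace Ω} {n : ℕ}
    (hψm : ∀ t, Measurable (fun q : (Fin p → ℝ) × (Fin d → ℝ) => ψ t q.1 q.2))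
    (hX0m : ∀ j, Measurable (X0 j)) (hUm : ∀ t < n, ∀ j, Measurable (U (t + 1) j)) :
    ∀ t ≤ n, ∀ j, Measurable (chain ψ X0 U t j)
  | 0, _, j => hX0m j
  | t + 1, ht, j =>
    (hψm (t + 1)).comp ((measurable_chain hψm hX0m hUm t (by omega) j).prodMk (hUm t ht j))

variable [MeasurableSpace Ω] {μ : Measure Ω}

lemma indepFun_chain_innovation [IsProbabilityMeasure μ] {T n : ℕ} (hn : n < T)
    (hψm : ∀ t, Measurable (fun q : (Fin p → ℝ) × (Fin d → ℝ) => ψ t q.1 q.2))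
    (hX0m : ∀ j, Measurable (X0 j)) (hUm : ∀ t j, Measurable (U t j))
    (hUindep : iIndepFun (fun (t : Fin T) ω (j : Fin k) => U ((t : ℕ) + 1) j ω) μ)
    (hX0U : IndepFun (fun ω (j : Fin k) => X0 j ω)
      (fun ω (t : Fin T) (j : Fin k) => U ((t : ℕ) + 1) j ω) μ)
    {sv : Fin k → ℕ} (hsv : ∀ j, sv j ≤ n) :
    IndepFun (fun ω j => chain ψ X0 U (sv j) j ω) (fun ω j => U (n + 1) j ω) μ := by
  let N : Fin T := ⟨n, hn⟩
  let past : Ω → (Fin k → Fin p → ℝ) × (Finset.Iio N → Fin k → Fin d → ℝ) :=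
    fun ω => (fun j => X0 j ω, fun s j => U ((s : Fin T) + 1) j ω)
  have h_past : IndepFun past (fun ω j => U (n + 1) j ω) μ := by
    refine IndepFun.prodMk_of_indepFun_prodMk (by fun_prop) (by fun_prop) (by fun_prop) ?_ ?_
    · exact hX0U.comp measurable_id
        (ψ := fun q : Fin T → Fin k → Fin d → ℝ => (fun s : Finset.Iio N => q s, q N)) (by fun_prop)
    · exact (hUindep.indepFun_finset (Finset.Iio N) {N}
        (Finset.disjoint_singleton_right.mpr Finset.notMem_Iio_self) fun _ => by fun_prop).comp
        measurable_id (measurable_pi_apply ⟨N, Finset.mem_singleton_self N⟩)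
  have hchain : Measurable[MeasurableSpace.comap past inferInstance]
      fun ω j => chain ψ X0 U (sv j) j ω := by
    refine @measurable_pi_lambda _ _ _ (.comap past inferInstance) _ _ fun j =>
      measurable_chain (m := .comap past inferInstance) hψm (fun j => ?_) (fun t ht j => ?_)
      (sv j) (hsv j) j
    · exact ((measurable_pi_apply j).comp measurable_fst).comp (comap_measurable past)
    · have hs : (⟨t, by omega⟩ : Fin T) ∈ Finset.Iio N := Finset.mem_Iio.mpr ht
      exact ((measurable_pi_apply j).comp ((measurable_pi_apply ⟨_, hs⟩).comp
        measurable_snd)).comp (comap_measurable past)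
  exact indep_of_indep_of_le_left h_past hchain.comap_le

lemma negAssocVec_chain [IsProbabilityMeasure μ] {T : ℕ}
    (hψmono : ∀ t, Monotone (fun q : (Fin p → ℝ) × (Fin d → ℝ) => ψ t q.1 q.2))
    (hψm : ∀ t, Measurable (fun q : (Fin p → ℝ) × (Fin d → ℝ) => ψ t q.1 q.2))
    (hX0m : ∀ j, Measurable (X0 j)) (hUm : ∀ t j, Measurable (U t j))
    (hUNA : ∀ t, 1 ≤ t → t ≤ T → NegAssocVec μ (fun j => U t j))
    (hUindep : iIndepFun (fun (t : Fin T) ω (j : Fin k) => U ((t : ℕ) + 1) j ω) μ)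
    (hX0U : IndepFun (fun ω (j : Fin k) => X0 j ω)
      (fun ω (t : Fin T) (j : Fin k) => U ((t : ℕ) + 1) j ω) μ)
    (hX0 : NegAssocVec μ X0) :
    ∀ n ≤ T, ∀ tv : Fin k → ℕ, (∀ j, tv j ≤ n) →
      NegAssocVec μ (fun j ω => chain ψ X0 U (tv j) j ω)
  | 0, _, tv, htv => by
    convert hX0 using 3 with j
    rw [Nat.le_zero.mp (htv j), chain]
  | n + 1, hn, tv, htv => by
    let step : Fin k → (Fin p → ℝ) × (Fin d → ℝ) → Fin p → ℝ := fun j =>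
      if tv j ≤ n then Prod.fst else fun q => ψ (n + 1) q.1 q.2
    have hstep := NegAssocVec.map₂_of_indepFun (g := step)
      (fun j => measurable_chain hψm hX0m (fun t _ => hUm (t + 1)) _ le_rfl j) (hUm (n + 1))
      (negAssocVec_chain hψmono hψm hX0m hUm hUNA hUindep hX0U hX0 n (by omega)
        (fun j => min (tv j) n) fun j => min_le_right _ _)
      (hUNA (n + 1) (by omega) hn)
      (indepFun_chain_innovation hn hψm hX0m hUm hUindep hX0U fun j => min_le_right _ _)
      (fun j => by unfold step; split_ifs; exacts [monotone_fst, hψmono _])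
      (fun j => by unfold step; split_ifs; exacts [measurable_fst, hψm _])
    convert hstep using 3 with j ω
    unfold step
    split_ifs with h
    · rw [min_eq_left h]
    · rw [show tv j = n + 1 by grind, min_eq_right n.le_succ, chain]

end Chain

/-- For antithetically coupled chains driven by nondecreasing update functions and
independent negatively associated innovations, the tuple `{X_{t₁}⁽¹⁾, …, X_{t_k}⁽ᵏ⁾}` is
negatively associated for every choice of times in `{0, …, T}` iff the initial tuple is
negatively associated. -/
theorem chain_negAssoc_iff_initial {Ω : Type*} [MeasurableSpace Ω] (μ : Measure Ω)
    [IsProbabilityMeasure μ] {p d k : ℕ} (T : ℕ)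
    (ψ : ℕ → (Fin p → ℝ) → (Fin d → ℝ) → Fin p → ℝ)
    (X0 : Fin k → Ω → Fin p → ℝ) (U : ℕ → Fin k → Ω → Fin d → ℝ)
    (hψmono : ∀ t, Monotone (fun q : (Fin p → ℝ) × (Fin d → ℝ) => ψ t q.1 q.2))
    (hψmeas : ∀ t, Measurable (fun q : (Fin p → ℝ) × (Fin d → ℝ) => ψ t q.1 q.2))
    (hX0m : ∀ j, Measurable (X0 j)) (hUm : ∀ t j, Measurable (U t j))
    (hUNA : ∀ t, 1 ≤ t → t ≤ T → NegAssocVec μ (fun j => U t j))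
    (hUindep : iIndepFun
      (fun (t : Fin T) ω (j : Fin k) => U ((t : ℕ) + 1) j ω) μ)
    (hX0U : IndepFun (fun ω (j : Fin k) => X0 j ω)
      (fun ω (t : Fin T) (j : Fin k) => U ((t : ℕ) + 1) j ω) μ) :
    (∀ tv : Fin k → ℕ, (∀ j, tv j ≤ T) →
        NegAssocVec μ (fun j ω => chain ψ X0 U (tv j) j ω)) ↔
      NegAssocVec μ X0 :=
  ⟨fun h => h (fun _ => 0) fun _ => T.zero_le,
    fun hX0 => negAssocVec_chain hψmono hψmeas hX0m hUm hUNA hUindep hX0U hX0 T le_rfl⟩
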